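/- Let (x̄,ū) be a W^{1,1} local minimizer for (FP3) such that x̄(T) = −1, x̄(t) > −1 for all t ∈ [t0, T), and x̄(t) < 1 for all t ∈ [t0, T]. Then either (i) T − t0 = (1+x0)/a and x̄(t) = x0 − a(t−t0) for all t ∈ [t0,T], or (ii) (1+x0)/a < T − t0 < (3−x0)/a and, with t_ζ := (T + t0 − (1+x0)/a)/2, x̄(t) = x0 + a(t−t0) for t ∈ [t0, t_ζ] and x̄(t) = −1 − a(t−T) for t ∈ (t_ζ, T]. -/

import Mathlib

open MeasureTheory Set

noncomputable section

/-- A feasible process for problem (FP3): `x` is the (absolutely continuous) state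
trajectory, represented as the indefinite integral of its a.e. derivative `-a*u`,
`u` is a measurable control with values in `[-1,1]` a.e., the initial condition is
`x t0 = x0`, and the bilateral state constraint `-1 ≤ x t ≤ 1` holds on `[t0,T]`. -/
def FP3Feasible (a t0 T x0 : ℝ) (x u : ℝ → ℝ) : Prop :=
  AEStronglyMeasurable u (volume.restrict (Icc t0 T)) ∧
  (∀ᵐ t ∂(volume.restrict (Icc t0 T)), u t ∈ Icc (-1 : ℝ) 1) ∧
  (∀ t ∈ Icc t0 T, x t = x0 + ∫ s in t0..t, -(a * u s)) ∧
  (∀ t ∈ Icc t0 T, x t ∈ Icc (-1 : ℝ) 1)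

/-- The cost functional of (FP3) on the interval `[t1,t2]`. -/
def FP3Cost (lam t1 t2 : ℝ) (x u : ℝ → ℝ) : ℝ :=
  ∫ t in t1..t2, -(Real.exp (-(lam * t)) * (x t + u t))

/-- `(x,u)` is a `W^{1,1}` local minimizer of (FP3). -/
def FP3LocalMin (a lam t0 T x0 : ℝ) (x u : ℝ → ℝ) : Prop :=
  FP3Feasible a t0 T x0 x u ∧
  ∃ δ > (0 : ℝ), ∀ y v, FP3Feasible a t0 T x0 y v →
    (∫ t in t0..T, |(-(a * v t)) - (-(a * u t))|) ≤ δ →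
    FP3Cost lam t0 T x u ≤ FP3Cost lam t0 T y v

/-- `(x,u)` is a `W^{1,1}` global minimizer of (FP3). -/
def FP3GlobalMin (a lam t0 T x0 : ℝ) (x u : ℝ → ℝ) : Prop :=
  FP3Feasible a t0 T x0 x u ∧
  ∀ y v, FP3Feasible a t0 T x0 y v → FP3Cost lam t0 T x u ≤ FP3Cost lam t0 T y v

/-- The function `Δ(t1,t2) = e^{-λ t1} - 2 e^{-λ (t1+t2)/2} + e^{-λ t2}`. -/
def FP3Delta (lam t1 t2 : ℝ) : ℝ :=
  Real.exp (-(lam * t1)) - 2 * Real.exp (-(lam * (t1 + t2) / 2)) + Real.exp (-(lam * t2))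

/-- The characteristic constant `ρ = (1/λ) ln (a/(a-λ))` of (FP3). -/
def FP3rho (a lam : ℝ) : ℝ := (1 / lam) * Real.log (a / (a - lam))

/-!
Since `u = -ẋ / a`, integrating by parts turns the cost of a feasible process into
`(λ / a - 1) ∫ e^{-λt} x + (e^{-λT} x(T) - e^{-λt₀} x₀) / a`; as `λ < a`, among trajectories with
the same endpoint a larger one is cheaper. Feasible processes form a convex set on which the cost is
affine, so a `W^{1,1}` local minimizer is a global one. Every feasible trajectory is `a`-Lipschitz,
so one that ends at `-1` lies below the envelope `min (x₀ + a (t - t₀)) (-1 + a (T - t)) 1`, which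
is itself feasible: the minimizer is the envelope. Staying below `1` forces the peak of the envelope
under `1`, which leaves the two tent shapes.
-/

open Real

theorem integral_exp_mul_eq_of_eq_primitive {f x : ℝ → ℝ} {lam t0 T : ℝ} (hT : t0 ≤ T)
    (hf : IntervalIntegrable f volume t0 T)
    (hx : ∀ t ∈ Icc t0 T, x t = x t0 + ∫ s in t0..t, f s) :
    ∫ t in t0..T, exp (-(lam * t)) * f t =
      exp (-(lam * T)) * x T - exp (-(lam * t0)) * x t0 +
        lam * ∫ t in t0..T, exp (-(lam * t)) * x t := by
  set E : ℝ → ℝ := fun t => exp (-(lam * t))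
  set F : ℝ → ℝ := fun t => x t0 + ∫ s in t0..t, f s
  have hE : AbsolutelyContinuousOnInterval E t0 T :=
    ContDiffOn.absolutelyContinuousOnInterval (by fun_prop)
  have hF : AbsolutelyContinuousOnInterval F t0 T :=
    (LipschitzWith.const (x t0)).lipschitzOnWith.absolutelyContinuousOnInterval.add
      (hf.absolutelyContinuousOnInterval_intervalIntegral left_mem_uIcc)
  have hE' : ∀ t, deriv E t = -lam * E t := fun t =>
    (((hasDerivAt_id t).const_mul lam).neg.exp.deriv).trans (by simp [E, mul_comm])
  have hF' : ∀ᵐ t, t ∈ uIoc t0 T → deriv F t = f t := by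
    filter_upwards [hf.ae_hasDerivAt_integral] with t ht htI
    exact ((ht (uIoc_subset_uIcc htI) t0 left_mem_uIcc).const_add (x t0)).deriv
  have hxF : EqOn x F (uIcc t0 T) := fun t ht => hx t (uIcc_of_le hT ▸ ht)
  have hfF : ∫ t in t0..T, E t * deriv F t = ∫ t in t0..T, E t * f t :=
    intervalIntegral.integral_congr_ae (hF'.mono fun t ht hI => by rw [ht hI])
  have hEx : ∫ t in t0..T, deriv E t * F t = -lam * ∫ t in t0..T, E t * x t := by
    rw [← intervalIntegral.integral_const_mul]
    exact intervalIntegral.integral_congr fun t ht => by rw [hE' t, ← hxF ht, mul_assoc]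
  rw [← hfF, hE.integral_mul_deriv_eq_deriv_mul hF, hEx, ← hxF right_mem_uIcc,
    ← hxF left_mem_uIcc]
  ring

def fp3Envelope (a t0 T x0 t : ℝ) : ℝ :=
  min (min (x0 + a * (t - t0)) (-1 + a * (T - t))) 1

section Envelope

variable {a t0 T x0 : ℝ}

theorem lipschitzWith_fp3Envelope : LipschitzWith ‖a‖₊ (fp3Envelope a t0 T x0) := by
  have hup : LipschitzWith ‖a‖₊ fun t => x0 + a * (t - t0) :=
    LipschitzWith.of_dist_le_mul fun s t => by
      rw [Real.dist_eq, Real.dist_eq, coe_nnnorm, Real.norm_eq_abs, ← abs_mul]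
      exact le_of_eq (congrArg abs (by ring))
  have hdown : LipschitzWith ‖a‖₊ fun t => -1 + a * (T - t) :=
    LipschitzWith.of_dist_le_mul fun s t => by
      rw [Real.dist_eq, Real.dist_eq, coe_nnnorm, Real.norm_eq_abs, ← abs_mul, ← abs_neg]
      exact le_of_eq (congrArg abs (by ring))
  have := (hup.min hdown).min (LipschitzWith.const 1)
  rwa [max_self, max_eq_left (by positivity)] at this

theorem fp3Envelope_left (hx0 : x0 ≤ 1) (hreach : 1 + x0 ≤ a * (T - t0)) :
    fp3Envelope a t0 T x0 t0 = x0 := by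
  rw [fp3Envelope, sub_self, mul_zero, add_zero,
    min_eq_left (show x0 ≤ -1 + a * (T - t0) by linarith), min_eq_left hx0]

theorem fp3Envelope_right (ha : 0 ≤ a) (hx0 : -1 ≤ x0) (hT : t0 ≤ T) :
    fp3Envelope a t0 T x0 T = -1 := by
  rw [fp3Envelope, sub_self, mul_zero, add_zero,
    min_eq_right (show -1 ≤ x0 + a * (T - t0) by nlinarith [mul_nonneg ha (sub_nonneg.2 hT)]),
    min_eq_left (by norm_num)]

theorem fp3Envelope_mem_Icc (ha : 0 ≤ a) (hx0 : -1 ≤ x0) {t : ℝ} (ht : t ∈ Icc t0 T) :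
    fp3Envelope a t0 T x0 t ∈ Icc (-1 : ℝ) 1 :=
  ⟨le_min (le_min (by nlinarith [mul_nonneg ha (sub_nonneg.2 ht.1)])
    (by nlinarith [mul_nonneg ha (sub_nonneg.2 ht.2)])) (by norm_num), min_le_right _ _⟩

end Envelope

namespace FP3Feasible

variable {a lam t0 T x0 : ℝ} {x u y v : ℝ → ℝ}

theorem integrableOn (h : FP3Feasible a t0 T x0 x u) : IntegrableOn u (Icc t0 T) := by
  refine Integrable.mono' (integrableOn_const (C := (1 : ℝ)) measure_Icc_lt_top.ne) h.1 ?_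
  filter_upwards [h.2.1] with t ht using abs_le.2 ht

theorem intervalIntegrable (h : FP3Feasible a t0 T x0 x u) {c d : ℝ}
    (hc : c ∈ Icc t0 T) (hd : d ∈ Icc t0 T) : IntervalIntegrable u volume c d :=
  (h.integrableOn.mono_set (uIcc_subset_Icc hc hd)).intervalIntegrable

theorem intervalIntegrable_velocity (h : FP3Feasible a t0 T x0 x u) {c d : ℝ}
    (hc : c ∈ Icc t0 T) (hd : d ∈ Icc t0 T) :
    IntervalIntegrable (fun t => -(a * u t)) volume c d :=
  ((h.intervalIntegrable hc hd).const_mul a).neg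

theorem apply_left (h : FP3Feasible a t0 T x0 x u) (hT : t0 ≤ T) : x t0 = x0 := by
  simpa using h.2.2.1 t0 (left_mem_Icc.2 hT)

theorem initial_mem_Icc (h : FP3Feasible a t0 T x0 x u) (hT : t0 ≤ T) : x0 ∈ Icc (-1 : ℝ) 1 :=
  h.apply_left hT ▸ h.2.2.2 t0 (left_mem_Icc.2 hT)

theorem abs_sub_le (h : FP3Feasible a t0 T x0 x u) {s t : ℝ}
    (hs : s ∈ Icc t0 T) (ht : t ∈ Icc t0 T) : |x t - x s| ≤ |a| * |t - s| := by
  have h0 : t0 ∈ Icc t0 T := left_mem_Icc.2 (hs.1.trans hs.2)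
  rw [h.2.2.1 t ht, h.2.2.1 s hs, add_sub_add_left_eq_sub,
    intervalIntegral.integral_interval_sub_left (h.intervalIntegrable_velocity h0 ht)
      (h.intervalIntegrable_velocity h0 hs)]
  refine intervalIntegral.norm_integral_le_of_norm_le_const_ae (f := fun r => -(a * u r)) ?_
  filter_upwards [ae_imp_of_ae_restrict h.2.1] with r hr hrst
  have := abs_le.2 (hr (uIoc_subset_uIcc.trans (uIcc_subset_Icc hs ht) hrst))
  simp only [norm_neg, norm_mul, Real.norm_eq_abs]
  nlinarith [abs_nonneg a]

theorem lipschitzOnWith (h : FP3Feasible a t0 T x0 x u) : LipschitzOnWith ‖a‖₊ x (Icc t0 T) :=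
  LipschitzOnWith.of_dist_le_mul fun t ht s hs => by
    simpa only [Real.dist_eq, coe_nnnorm, Real.norm_eq_abs] using h.abs_sub_le hs ht

theorem one_add_le_mul_sub (h : FP3Feasible a t0 T x0 x u) (ha : 0 ≤ a) (hT : t0 ≤ T)
    (hend : x T = -1) :
    1 + x0 ≤ a * (T - t0) := by
  have := h.abs_sub_le (left_mem_Icc.2 hT) (right_mem_Icc.2 hT)
  rw [hend, h.apply_left hT, abs_of_nonneg ha, abs_of_nonneg (sub_nonneg.2 hT)] at this
  linarith [(abs_le.1 this).1]

theorem le_fp3Envelope (h : FP3Feasible a t0 T x0 x u) (ha : 0 ≤ a) (hend : x T = -1) {t : ℝ}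
    (ht : t ∈ Icc t0 T) : x t ≤ fp3Envelope a t0 T x0 t := by
  have hT := ht.1.trans ht.2
  have h0 := h.abs_sub_le (left_mem_Icc.2 hT) ht
  have h1 := h.abs_sub_le ht (right_mem_Icc.2 hT)
  rw [h.apply_left hT, abs_of_nonneg ha, abs_of_nonneg (sub_nonneg.2 ht.1)] at h0
  rw [hend, abs_of_nonneg ha, abs_of_nonneg (sub_nonneg.2 ht.2)] at h1
  exact le_min (le_min (by linarith [(abs_le.1 h0).2]) (by linarith [(abs_le.1 h1).1]))
    (h.2.2.2 t ht).2

theorem intervalIntegrable_cost (h : FP3Feasible a t0 T x0 x u) (hT : t0 ≤ T) :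
    IntervalIntegrable (fun t => -(exp (-(lam * t)) * (x t + u t))) volume t0 T := by
  have hE : Continuous fun t => exp (-(lam * t)) := by fun_prop
  exact (((h.lipschitzOnWith.continuousOn.intervalIntegrable_of_Icc hT).add
    (h.intervalIntegrable (left_mem_Icc.2 hT) (right_mem_Icc.2 hT))).continuousOn_mul
    hE.continuousOn).neg

theorem fp3Cost_eq (h : FP3Feasible a t0 T x0 x u) (ha : a ≠ 0) (hT : t0 ≤ T) :
    FP3Cost lam t0 T x u =
      (lam / a - 1) * (∫ t in t0..T, exp (-(lam * t)) * x t) +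
        (exp (-(lam * T)) * x T - exp (-(lam * t0)) * x0) / a := by
  have h0 := left_mem_Icc.2 hT
  have h1 := right_mem_Icc.2 hT
  have hE : Continuous fun t => exp (-(lam * t)) := by fun_prop
  have ibp := integral_exp_mul_eq_of_eq_primitive (x := x) (lam := lam) hT
    (h.intervalIntegrable_velocity h0 h1) (fun t ht => by rw [h.apply_left hT]; exact h.2.2.1 t ht)
  have hEu : ∫ t in t0..T, exp (-(lam * t)) * -(a * u t) =
      -a * ∫ t in t0..T, exp (-(lam * t)) * u t := by
    rw [← intervalIntegral.integral_const_mul]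
    exact intervalIntegral.integral_congr fun t _ => by ring
  simp only [FP3Cost, mul_add]
  rw [intervalIntegral.integral_neg, intervalIntegral.integral_add
      ((h.lipschitzOnWith.continuousOn.intervalIntegrable_of_Icc hT).continuousOn_mul
        hE.continuousOn)
      ((h.intervalIntegrable h0 h1).continuousOn_mul hE.continuousOn)]
  rw [hEu, h.apply_left hT] at ibp
  have hB : ∫ t in t0..T, exp (-(lam * t)) * u t = -(exp (-(lam * T)) * x T -
      exp (-(lam * t0)) * x0 + lam * ∫ t in t0..T, exp (-(lam * t)) * x t) / a := by
    rw [eq_div_iff ha]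
    linarith
  rw [hB]
  ring

theorem combo (hxu : FP3Feasible a t0 T x0 x u) (hyv : FP3Feasible a t0 T x0 y v) {θ : ℝ}
    (hθ₀ : 0 ≤ θ) (hθ₁ : θ ≤ 1) :
    FP3Feasible a t0 T x0 (fun t => (1 - θ) * x t + θ * y t)
      (fun t => (1 - θ) * u t + θ * v t) := by
  refine ⟨(hxu.1.const_mul _).add (hyv.1.const_mul _), ?_, fun t ht => ?_, fun t ht => ?_⟩
  · filter_upwards [hxu.2.1, hyv.2.1] with t hu hv
    constructor <;> nlinarith [hu.1, hu.2, hv.1, hv.2]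
  · have h0 : t0 ∈ Icc t0 T := left_mem_Icc.2 (ht.1.trans ht.2)
    have hsplit : ∀ s, -(a * ((1 - θ) * u s + θ * v s)) = (1 - θ) * -(a * u s) + θ * -(a * v s) :=
      fun s => by ring
    simp only [hxu.2.2.1 t ht, hyv.2.2.1 t ht, hsplit]
    rw [intervalIntegral.integral_add ((hxu.intervalIntegrable_velocity h0 ht).const_mul _)
      ((hyv.intervalIntegrable_velocity h0 ht).const_mul _), intervalIntegral.integral_const_mul,
      intervalIntegral.integral_const_mul]
    ring
  · have hx := hxu.2.2.2 t ht
    have hy := hyv.2.2.2 t ht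
    constructor <;> nlinarith [hx.1, hx.2, hy.1, hy.2]

theorem fp3Cost_combo (hxu : FP3Feasible a t0 T x0 x u) (hyv : FP3Feasible a t0 T x0 y v)
    (hT : t0 ≤ T) (θ : ℝ) :
    FP3Cost lam t0 T (fun t => (1 - θ) * x t + θ * y t) (fun t => (1 - θ) * u t + θ * v t) =
      (1 - θ) * FP3Cost lam t0 T x u + θ * FP3Cost lam t0 T y v := by
  have hsplit : ∀ t,
      -(exp (-(lam * t)) * (((1 - θ) * x t + θ * y t) + ((1 - θ) * u t + θ * v t))) =
        (1 - θ) * -(exp (-(lam * t)) * (x t + u t)) + θ * -(exp (-(lam * t)) * (y t + v t)) :=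
    fun t => by ring
  simp only [FP3Cost, hsplit]
  rw [intervalIntegral.integral_add ((hxu.intervalIntegrable_cost hT).const_mul _)
      ((hyv.intervalIntegrable_cost hT).const_mul _), intervalIntegral.integral_const_mul,
      intervalIntegral.integral_const_mul]

theorem of_lipschitzWith (ha : a ≠ 0) (hx : LipschitzWith ‖a‖₊ x) (hx0 : x t0 = x0)
    (hmem : ∀ t ∈ Icc t0 T, x t ∈ Icc (-1 : ℝ) 1) :
    FP3Feasible a t0 T x0 x (fun t => -deriv x t / a) := by
  have hbound : ∀ t, -deriv x t / a ∈ Icc (-1 : ℝ) 1 := fun t => by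
    have := norm_deriv_le_of_lipschitz (x₀ := t) hx
    rw [Real.norm_eq_abs, coe_nnnorm, Real.norm_eq_abs] at this
    rw [mem_Icc, ← abs_le, abs_div, abs_neg, div_le_one (abs_pos.2 ha)]
    exact this
  refine ⟨((measurable_deriv x).neg.div_const a).aestronglyMeasurable,
    Filter.Eventually.of_forall hbound, fun t _ => ?_, hmem⟩
  have hac := hx.lipschitzOnWith (s := uIcc t0 t).absolutelyContinuousOnInterval
  simp only [mul_div_cancel₀ _ ha, neg_neg, hac.integral_deriv_eq_sub, hx0]
  ring

end FP3Feasible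

theorem exists_fp3Feasible_fp3Envelope {a t0 T x0 : ℝ} (ha : 0 < a) (hx0 : x0 ∈ Icc (-1 : ℝ) 1)
    (hreach : 1 + x0 ≤ a * (T - t0)) : ∃ u, FP3Feasible a t0 T x0 (fp3Envelope a t0 T x0) u :=
  ⟨_, .of_lipschitzWith ha.ne' lipschitzWith_fp3Envelope (fp3Envelope_left hx0.2 hreach)
    fun _ => fp3Envelope_mem_Icc ha.le hx0.1⟩

theorem FP3LocalMin.fp3GlobalMin {a lam t0 T x0 : ℝ} {x u : ℝ → ℝ}
    (h : FP3LocalMin a lam t0 T x0 x u) (hT : t0 ≤ T) :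
    FP3GlobalMin a lam t0 T x0 x u := by
  obtain ⟨hxu, δ, hδ, hmin⟩ := h
  refine ⟨hxu, fun y v hyv => ?_⟩
  have hC : 0 < 2 * |a| * (T - t0) + 1 := by
    have := mul_nonneg (abs_nonneg a) (sub_nonneg.2 hT); linarith
  set θ := min 1 (δ / (2 * |a| * (T - t0) + 1))
  have hθ₀ : 0 < θ := lt_min one_pos (div_pos hδ hC)
  have hθ₁ : θ ≤ 1 := min_le_left _ _
  have hθδ : θ * (2 * |a| * (T - t0)) ≤ δ := by
    have := (le_div_iff₀ hC).1 (min_le_right 1 (δ / (2 * |a| * (T - t0) + 1)))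
    nlinarith
  have hdist : ∫ t in t0..T, |-(a * ((1 - θ) * u t + θ * v t)) - -(a * u t)| ≤ δ := by
    refine (le_abs_self _).trans ((intervalIntegral.norm_integral_le_of_norm_le_const_ae
      (f := fun t => |-(a * ((1 - θ) * u t + θ * v t)) - -(a * u t)|)
      (C := θ * (2 * |a|)) ?_).trans ?_)
    · filter_upwards [ae_imp_of_ae_restrict hxu.2.1, ae_imp_of_ae_restrict hyv.2.1]
        with t hu hv ht
      rw [uIoc_of_le hT] at ht
      have hu := hu (Ioc_subset_Icc_self ht)
      have hv := hv (Ioc_subset_Icc_self ht)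
      have huv : |u t - v t| ≤ 2 := abs_le.2 ⟨by linarith [hu.1, hv.2], by linarith [hu.2, hv.1]⟩
      rw [Real.norm_eq_abs, abs_abs, show -(a * ((1 - θ) * u t + θ * v t)) - -(a * u t) =
        θ * a * (u t - v t) by ring, abs_mul, abs_mul, abs_of_pos hθ₀]
      nlinarith [mul_le_mul_of_nonneg_left huv (mul_nonneg hθ₀.le (abs_nonneg a))]
    · rw [abs_of_nonneg (sub_nonneg.2 hT)]
      linarith
  have hcost := hmin _ _ (hxu.combo hyv hθ₀.le hθ₁) hdist
  rw [hxu.fp3Cost_combo hyv hT] at hcost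
  nlinarith

theorem FP3GlobalMin.eqOn_fp3Envelope {a lam t0 T x0 : ℝ} {x u : ℝ → ℝ}
    (h : FP3GlobalMin a lam t0 T x0 x u) (ha : 0 < a) (hal : lam < a) (htT : t0 < T)
    (hend : x T = -1) : EqOn x (fp3Envelope a t0 T x0) (Icc t0 T) := by
  obtain ⟨hxu, hmin⟩ := h
  have hx0 := hxu.initial_mem_Icc htT.le
  obtain ⟨um, henv⟩ :=
    exists_fp3Feasible_fp3Envelope ha hx0 (hxu.one_add_le_mul_sub ha.le htT.le hend)
  have hcost := hmin _ _ henv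
  rw [hxu.fp3Cost_eq ha.ne' htT.le, henv.fp3Cost_eq ha.ne' htT.le, hend,
    fp3Envelope_right ha.le hx0.1 htT.le] at hcost
  have hcoef : lam / a - 1 < 0 := by rw [sub_neg, div_lt_one ha]; exact hal
  have hint : ∫ t in t0..T, exp (-(lam * t)) * fp3Envelope a t0 T x0 t ≤
      ∫ t in t0..T, exp (-(lam * t)) * x t := by
    nlinarith
  intro t ht
  by_contra hne
  have hE : Continuous fun t => exp (-(lam * t)) := by fun_prop
  have hle : ∀ s ∈ Icc t0 T, x s ≤ fp3Envelope a t0 T x0 s :=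
    fun s hs => hxu.le_fp3Envelope ha.le hend hs
  have hlt := intervalIntegral.integral_lt_integral_of_continuousOn_of_le_of_exists_lt htT
    (hE.continuousOn.mul hxu.lipschitzOnWith.continuousOn)
    (hE.continuousOn.mul henv.lipschitzOnWith.continuousOn)
    (fun s hs => mul_le_mul_of_nonneg_left (hle s (Ioc_subset_Icc_self hs)) (exp_pos _).le)
    ⟨t, ht, mul_lt_mul_of_pos_left ((hle t ht).lt_of_ne hne) (exp_pos _)⟩
  simp only [Pi.mul_apply] at hlt
  linarith

theorem tent_of_eqOn_fp3Envelope {a t0 T x0 : ℝ} {x : ℝ → ℝ} (ha : 0 < a) (hx0 : -1 ≤ x0)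
    (hreach : 1 + x0 ≤ a * (T - t0)) (hx : EqOn x (fp3Envelope a t0 T x0) (Icc t0 T))
    (hbelow : ∀ t ∈ Icc t0 T, x t < 1) :
    (T - t0 = (1 + x0) / a ∧ ∀ t ∈ Icc t0 T, x t = x0 - a * (t - t0)) ∨
    ((1 + x0) / a < T - t0 ∧ T - t0 < (3 - x0) / a ∧
      (∀ t ∈ Icc t0 ((T + t0 - (1 + x0) / a) / 2), x t = x0 + a * (t - t0)) ∧
      (∀ t ∈ Ioc ((T + t0 - (1 + x0) / a) / 2) T, x t = -1 - a * (t - T))) := by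
  set tz := (T + t0 - (1 + x0) / a) / 2
  have hq : a * ((1 + x0) / a) = 1 + x0 := mul_div_cancel₀ _ ha.ne'
  have hatz : 2 * (a * tz) = a * (T + t0) - (1 + x0) := by
    simp only [tz]; linear_combination -hq
  have hqle : (1 + x0) / a ≤ T - t0 := by rw [div_le_iff₀ ha]; linarith
  have htz : tz ∈ Icc t0 T := ⟨by simp only [tz]; linarith, by
    simp only [tz]; linarith [div_nonneg (neg_le_iff_add_nonneg'.1 hx0) ha.le]⟩
  have hpeak : x0 + a * (tz - t0) < 1 := by
    have := hx htz ▸ hbelow tz htz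
    rw [fp3Envelope, show -1 + a * (T - tz) = x0 + a * (tz - t0) by linarith, min_self,
      min_lt_iff] at this
    exact this.resolve_right (lt_irrefl 1)
  have hrise : ∀ t ∈ Icc t0 tz, x t = x0 + a * (t - t0) := fun t ht => by
    have := mul_le_mul_of_nonneg_left ht.2 ha.le
    rw [hx ⟨ht.1, ht.2.trans htz.2⟩, fp3Envelope,
      min_eq_left (show x0 + a * (t - t0) ≤ -1 + a * (T - t) by linarith),
      min_eq_left (show x0 + a * (t - t0) ≤ 1 by linarith)]
  have hfall : ∀ t ∈ Icc tz T, x t = -1 - a * (t - T) := fun t ht => by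
    have := mul_le_mul_of_nonneg_left ht.1 ha.le
    rw [hx ⟨htz.1.trans ht.1, ht.2⟩, fp3Envelope,
      min_eq_right (show -1 + a * (T - t) ≤ x0 + a * (t - t0) by linarith),
      min_eq_left (show -1 + a * (T - t) ≤ 1 by linarith)]
    ring
  rcases hqle.eq_or_lt with heq | hlt
  · refine Or.inl ⟨heq.symm, fun t ht => ?_⟩
    have htz0 : tz = t0 := by simp only [tz]; linarith
    rw [hfall t (htz0 ▸ ht)]
    linear_combination hq - a * heq
  · refine Or.inr ⟨hlt, ?_, fun t ht => hrise t ht, fun t ht => hfall t (Ioc_subset_Icc_self ht)⟩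
    rw [lt_div_iff₀ ha]
    linarith

theorem fp3_subcase_3a_general
    (a lam t0 T x0 : ℝ) (hal : lam < a) (hlam : 0 < lam)
    (htT : t0 < T)
    (xb ub : ℝ → ℝ) (hmin : FP3LocalMin a lam t0 T x0 xb ub)
    (hend : xb T = -1)
    (hbelow : ∀ t ∈ Icc t0 T, xb t < 1) :
    (T - t0 = (1 + x0) / a ∧ ∀ t ∈ Icc t0 T, xb t = x0 - a * (t - t0)) ∨
    ((1 + x0) / a < T - t0 ∧ T - t0 < (3 - x0) / a ∧
      (∀ t ∈ Icc t0 ((T + t0 - (1 + x0) / a) / 2), xb t = x0 + a * (t - t0)) ∧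
      (∀ t ∈ Ioc ((T + t0 - (1 + x0) / a) / 2) T, xb t = -1 - a * (t - T))) := by
  have ha : 0 < a := hlam.trans hal
  have hglobal := hmin.fp3GlobalMin htT.le
  exact tent_of_eqOn_fp3Envelope ha (hglobal.1.initial_mem_Icc htT.le).1
    (hglobal.1.one_add_le_mul_sub ha.le htT.le hend) (hglobal.eqOn_fp3Envelope ha hal htT hend)
    hbelow

/-- Subcase 3a: a local minimizer whose trajectory ends at `-1`,
stays above `-1` on `[t0,T)` and strictly below `1` on `[t0,T]` has one of two
explicit forms. -/
theorem fp3_subcase_3a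
    (a lam t0 T x0 : ℝ) (hal : lam < a) (hlam : 0 < lam)
    (ht0 : 0 ≤ t0) (htT : t0 < T) (hx0 : x0 ∈ Icc (-1 : ℝ) 1)
    (xb ub : ℝ → ℝ) (hmin : FP3LocalMin a lam t0 T x0 xb ub)
    (hend : xb T = -1)
    (habove : ∀ t ∈ Ico t0 T, -1 < xb t)
    (hbelow : ∀ t ∈ Icc t0 T, xb t < 1) :
    (T - t0 = (1 + x0) / a ∧ ∀ t ∈ Icc t0 T, xb t = x0 - a * (t - t0)) ∨
    ((1 + x0) / a < T - t0 ∧ T - t0 < (3 - x0) / a ∧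
      (∀ t ∈ Icc t0 ((T + t0 - (1 + x0) / a) / 2), xb t = x0 + a * (t - t0)) ∧
      (∀ t ∈ Ioc ((T + t0 - (1 + x0) / a) / 2) T, xb t = -1 - a * (t - T))) :=
  fp3_subcase_3a_general a lam t0 T x0 hal hlam htT xb ub hmin hend hbelow
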